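/- Let f be a Laurent polynomial in one complex variable with complex coefficients such that f(z) is real and nonnegative for all z on the unit circle. Then there exists a polynomial p with complex coefficients such that f(z) = |p(z)|^2 for all z on the unit circle. -/

import Mathlib

/-!
The Cayley map `t ↦ (1 + i t) / (1 - i t)` carries `ℝ` onto the unit circle minus `-1`.
If `n` bounds the absolute values of the exponents of `f`, then
`(1 + t²)ⁿ f((1 + i t) / (1 - i t))` is a real polynomial `R(t)` of degree at most `2n`,
nonnegative on `ℝ`. Its real roots have even multiplicity and its nonreal roots come in
conjugate pairs, so `R` is a product of factors `|t - α|²`, i.e. `R(t) = |A(t)|²` with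
`deg A ≤ n`. Pulling `A` back along the inverse Cayley map and homogenizing to degree `n` gives
`p` with `f = |p|²` on the circle minus `-1`, and continuity covers `-1`.
-/

open Polynomial Complex ComplexConjugate Filter Topology
open scoped ComplexOrder

namespace Polynomial

theorem eval_nonneg_of_eval_mul_nonneg {p q : ℝ[X]} (hp : p ≠ 0) (hp_nonneg : ∀ t, 0 ≤ p.eval t)
    (hpq : ∀ t, 0 ≤ (p * q).eval t) (t : ℝ) : 0 ≤ q.eval t := by
  have hdense : Dense {t | p.eval t ≠ 0} :=
    (finite_setOfPred_isRoot hp).countable.dense_compl ℝ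
  have hsub : {t | p.eval t ≠ 0} ⊆ {t | 0 ≤ q.eval t} := fun s hs =>
    nonneg_of_mul_nonneg_right (by simpa using hpq s) ((hp_nonneg s).lt_of_ne' hs)
  have := (isClosed_le continuous_const q.continuous).closure_subset_iff.2 hsub
  exact this (hdense.closure_eq ▸ Set.mem_univ t)

theorem sq_X_sub_C_dvd_of_isRoot_of_nonneg {p : ℝ[X]} (hp : p ≠ 0)
    (hp_nonneg : ∀ t, 0 ≤ p.eval t) {r : ℝ} (hr : p.IsRoot r) : (X - C r) ^ 2 ∣ p := by
  have hmin : IsLocalMin (fun t => p.eval t) r :=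
    Eventually.of_forall fun t => by simpa [hr.eq_zero] using hp_nonneg t
  rw [← le_rootMultiplicity_iff hp]
  exact (one_lt_rootMultiplicity_iff_isRoot hp).2
    ⟨hr, by simpa [IsRoot, Polynomial.deriv] using hmin.deriv_eq_zero⟩

theorem exists_map_eq_of_eval_im_eq_zero {Q : ℂ[X]} (hQ : ∀ t : ℝ, (Q.eval (t : ℂ)).im = 0) :
    ∃ R : ℝ[X], R.map (algebraMap ℝ ℂ) = Q := by
  have hconj : Q.map (starRingEnd ℂ) = Q := by
    refine eq_of_infinite_eval_eq _ _
      ((Set.infinite_range_of_injective ofReal_injective).mono ?_)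
    rintro _ ⟨t, rfl⟩
    rw [Set.mem_ofPred_eq, eval_map, ← conj_eq_iff_im.2 (hQ t)]
    simpa using eval₂_at_apply (starRingEnd ℂ) (t : ℂ)
  refine (lifts_iff_coeff_lifts Q).2 fun n => ?_
  obtain ⟨r, hr⟩ :=
    conj_eq_iff_real.1 (by rw [← coeff_map, hconj] : conj (Q.coeff n) = Q.coeff n)
  exact ⟨r, hr.symm⟩

/-- The real quadratic with roots `α` and `conj α`. -/
noncomputable def conjQuadratic (α : ℂ) : ℝ[X] := X ^ 2 - C (2 * α.re) * X + C (‖α‖ ^ 2)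

theorem eval_conjQuadratic (α : ℂ) (t : ℝ) :
    (conjQuadratic α).eval t = ‖(t : ℂ) - α‖ ^ 2 := by
  rw [conjQuadratic, ← normSq_eq_norm_sq, ← normSq_eq_norm_sq, normSq_apply, normSq_apply]
  simp only [eval_add, eval_sub, eval_pow, eval_X, eval_mul, eval_C, sub_re, ofReal_re,
    sub_im, ofReal_im]
  ring

theorem natDegree_conjQuadratic (α : ℂ) : (conjQuadratic α).natDegree = 2 := by
  rw [conjQuadratic]
  compute_degree!

theorem exists_conjQuadratic_dvd {R : ℝ[X]} (hR : ∀ t, 0 ≤ R.eval t) (hdeg : 0 < R.natDegree) :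
    ∃ α : ℂ, conjQuadratic α ∣ R := by
  have hR0 : R ≠ 0 := ne_zero_of_natDegree_gt hdeg
  obtain ⟨α, hα⟩ := Complex.exists_root (f := R.map (algebraMap ℝ ℂ))
    (by rwa [degree_map, ← natDegree_pos_iff_degree_pos])
  have hαR : aeval α R = 0 := by rwa [aeval_def, eval₂_eq_eval_map]
  refine ⟨α, ?_⟩
  by_cases him : α.im = 0
  · have hr : R.IsRoot α.re := by
      rw [← re_add_im α, him, ofReal_zero, zero_mul, add_zero] at hαR
      exact ofReal_eq_zero.1 ((ofReal_eval (K := ℂ) R α.re).trans hαR)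
    convert sq_X_sub_C_dvd_of_isRoot_of_nonneg hR0 hR hr using 1
    rw [conjQuadratic, ← normSq_eq_norm_sq, normSq_apply, him]
    simp only [mul_zero, add_zero, map_mul, map_ofNat]
    ring
  · exact quadratic_dvd_of_aeval_eq_zero_im_ne_zero R hαR him

theorem exists_eval_eq_norm_sq_of_nonneg (R : ℝ[X]) (hR : ∀ t, 0 ≤ R.eval t) :
    ∃ A : ℂ[X], 2 * A.natDegree ≤ R.natDegree ∧ ∀ t : ℝ, R.eval t = ‖A.eval (t : ℂ)‖ ^ 2 := by
  induction hN : R.natDegree using Nat.strong_induction_on generalizing R with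
  | _ N ih =>
  rcases N.eq_zero_or_pos with rfl | hpos
  · obtain ⟨a, rfl⟩ := natDegree_eq_zero.1 hN
    have ha : 0 ≤ a := by simpa using hR 0
    exact ⟨C (Real.sqrt a : ℂ), by simp, fun t => by simp [ha]⟩
  obtain ⟨α, T, rfl⟩ := exists_conjQuadratic_dvd hR (hN ▸ hpos)
  have hq0 : conjQuadratic α ≠ 0 := by
    intro h
    simpa [h] using natDegree_conjQuadratic α
  have hT0 : T ≠ 0 := by
    rintro rfl
    rw [mul_zero, natDegree_zero] at hN
    omega
  have hTdeg : T.natDegree + 2 = N := by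
    rw [← hN, natDegree_mul hq0 hT0, natDegree_conjQuadratic, add_comm]
  have hT : ∀ t, 0 ≤ T.eval t :=
    eval_nonneg_of_eval_mul_nonneg hq0 (fun t => by rw [eval_conjQuadratic]; positivity) hR
  obtain ⟨B, hBdeg, hB⟩ := ih T.natDegree (by omega) T hT rfl
  refine ⟨(X - C α) * B, ?_, fun t => ?_⟩
  · have := natDegree_mul_le (p := X - C α) (q := B)
    rw [natDegree_X_sub_C] at this
    omega
  · rw [eval_mul, eval_conjQuadratic, hB, eval_mul, eval_sub, eval_X, eval_C, norm_mul, mul_pow]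

section HomogenizeComp

variable {K : Type*} [Field K]

/-- `V ^ n * p (U / V)`, written as a polynomial. -/
noncomputable def homogenizeComp (p : K[X]) (n : ℕ) (U V : K[X]) : K[X] :=
  MvPolynomial.aeval ![U, V] (p.homogenize n)

theorem eval_homogenizeComp {p : K[X]} {n : ℕ} (hn : p.natDegree ≤ n) (U V : K[X]) {x : K}
    (hx : V.eval x ≠ 0) :
    (p.homogenizeComp n U V).eval x = p.eval (U.eval x / V.eval x) * V.eval x ^ n := by
  refine Eq.trans ?_ (eval_homogenize hn ![U.eval x, V.eval x] hx)
  rw [homogenizeComp, ← coe_aeval_eq_eval, MvPolynomial.comp_aeval_apply]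
  exact congrArg (fun y => MvPolynomial.eval y (p.homogenize n)) (by funext i; fin_cases i <;> rfl)

theorem natDegree_homogenizeComp_le (p : K[X]) (n : ℕ) {U V : K[X]} (hU : U.natDegree ≤ 1)
    (hV : V.natDegree ≤ 1) : (p.homogenizeComp n U V).natDegree ≤ n := by
  simpa [homogenizeComp] using MvPolynomial.aeval_natDegree_le (m := n) (n := 1) _
    (isHomogeneous_homogenize p).totalDegree_le ![U, V] (Fin.forall_fin_two.2 ⟨hU, hV⟩)

end HomogenizeComp

theorem exists_eval_eq_pow_mul_laurent {K : Type*} [Field K] (s : Finset ℤ) (c : ℤ → K) :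
    ∃ (n : ℕ) (P : K[X]), P.natDegree ≤ 2 * n ∧
      ∀ z : K, z ≠ 0 → P.eval z = z ^ n * ∑ k ∈ s, c k * z ^ k := by
  set n := s.sup Int.natAbs
  have hks : ∀ k ∈ s, k.natAbs ≤ n := fun k hk => Finset.le_sup hk
  refine ⟨n, ∑ k ∈ s, C (c k) * X ^ (k + n).toNat, ?_, fun z hz => ?_⟩
  · refine natDegree_sum_le_of_forall_le _ _ fun k hk => (natDegree_C_mul_X_pow_le _ _).trans ?_
    have := hks k hk
    omega
  · rw [eval_finsetSum, Finset.mul_sum]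
    refine Finset.sum_congr rfl fun k hk => ?_
    have := hks k hk
    rw [eval_C_mul, eval_X_pow, ← zpow_natCast, Int.toNat_of_nonneg (by omega), zpow_add₀ hz,
      zpow_natCast]
    ring

end Polynomial

noncomputable def cayley (t : ℝ) : ℂ := (1 + I * t) / (1 - I * t)

theorem one_sub_I_mul_ne_zero (t : ℝ) : 1 - I * t ≠ 0 := fun h => by
  simpa using congrArg re h

theorem norm_one_sub_I_mul_sq (t : ℝ) : ‖1 - I * t‖ ^ 2 = 1 + t ^ 2 := by
  rw [← normSq_eq_norm_sq, normSq_apply]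
  simp only [sub_re, one_re, mul_re, I_re, ofReal_re, zero_mul, I_im, ofReal_im, mul_zero,
    sub_self, sub_zero, sub_im, one_im, mul_im, one_mul, zero_add, zero_sub]
  ring

theorem norm_cayley (t : ℝ) : ‖cayley t‖ = 1 := by
  have : ‖1 + I * t‖ = ‖1 - I * t‖ := by
    rw [← norm_conj (1 - I * t), map_sub, map_one, map_mul, conj_I, conj_ofReal, neg_mul,
      sub_neg_eq_add]
  rw [cayley, norm_div, this, div_self (norm_ne_zero_iff.2 (one_sub_I_mul_ne_zero t))]

theorem cayley_ne_zero (t : ℝ) : cayley t ≠ 0 :=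
  norm_ne_zero_iff.1 (by rw [norm_cayley]; exact one_ne_zero)

theorem one_sub_I_mul_pow_mul_cayley_pow (t : ℝ) (n : ℕ) :
    (1 - I * t) ^ (2 * n) * cayley t ^ n = ((1 + t ^ 2 : ℝ) : ℂ) ^ n := by
  have := pow_ne_zero n (one_sub_I_mul_ne_zero t)
  rw [cayley, div_pow, mul_comm 2 n, pow_mul, ofReal_add, ofReal_one, ofReal_pow]
  field_simp
  rw [← mul_pow]
  congr 1
  linear_combination (-(t : ℂ) ^ 2) * I_sq

theorem cayley_add_one (t : ℝ) : cayley t + 1 = 2 / (1 - I * t) := by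
  rw [cayley]
  field_simp [one_sub_I_mul_ne_zero t]
  ring

theorem cayley_sub_one (t : ℝ) : cayley t - 1 = 2 * I * t / (1 - I * t) := by
  rw [cayley]
  field_simp [one_sub_I_mul_ne_zero t]
  ring

theorem exists_cayley_eq {z : ℂ} (hz : ‖z‖ = 1) (hz1 : z ≠ -1) : ∃ t : ℝ, cayley t = z := by
  have hsq : z.re * z.re + z.im * z.im = 1 := by
    rw [← normSq_apply, normSq_eq_norm_sq, hz, one_pow]
  have hre : 1 + z.re ≠ 0 := by
    intro h
    refine hz1 (Complex.ext (by rw [neg_re, one_re]; linarith) ?_)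
    rw [neg_im, one_im, neg_zero]
    nlinarith
  -- `t = tan (θ / 2)` for `z = exp (θ * I)`
  set t := z.im / (1 + z.re) with ht
  refine ⟨t, ?_⟩
  rw [cayley, div_eq_iff (one_sub_I_mul_ne_zero _)]
  apply Complex.ext
  · simp only [add_re, one_re, mul_re, I_re, ofReal_re, zero_mul, I_im, ofReal_im, mul_zero,
      sub_self, add_zero, sub_re, sub_zero, mul_one, sub_im, one_im, mul_im, one_mul, zero_add,
      zero_sub, mul_neg, sub_neg_eq_add]
    rw [ht]
    field_simp
    linear_combination -hsq
  · simp only [add_im, one_im, mul_im, I_re, ofReal_im, mul_zero, I_im, ofReal_re, one_mul,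
      zero_add, sub_im, zero_sub, mul_neg, sub_re, one_re, mul_re, zero_mul, sub_self, sub_zero,
      mul_one]
    rw [ht]
    field_simp
    ring

theorem tendsto_cayley_atTop : Tendsto cayley atTop (𝓝 (-1)) := by
  have hbig : Tendsto (fun t : ℝ => 1 - I * t) atTop (Bornology.cobounded ℂ) := by
    refine tendsto_norm_atTop_iff_cobounded.1 (tendsto_atTop_mono (fun t => ?_) tendsto_id)
    have := abs_im_le_norm (1 - I * t)
    simp only [sub_im, one_im, mul_im, I_re, I_im, ofReal_re, ofReal_im] at this
    exact (le_abs_self t).trans (by simpa using this)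
  have hform : cayley = fun t : ℝ => 2 * (1 - I * t)⁻¹ - 1 := by
    funext t
    rw [cayley]
    field_simp [one_sub_I_mul_ne_zero t]
    ring
  simpa [hform] using ((tendsto_inv₀_cobounded.comp hbig).const_mul 2).sub_const 1

theorem eq_of_eq_comp_cayley {g h : ℂ → ℂ} (hg : ContinuousAt g (-1)) (hh : ContinuousAt h (-1))
    (hgh : ∀ t, g (cayley t) = h (cayley t)) {z : ℂ} (hz : ‖z‖ = 1) : g z = h z := by
  by_cases hz1 : z = -1
  · subst hz1
    exact tendsto_nhds_unique ((hg.tendsto.comp tendsto_cayley_atTop).congr hgh)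
      (hh.tendsto.comp tendsto_cayley_atTop)
  · obtain ⟨t, rfl⟩ := exists_cayley_eq hz hz1
    exact hgh t

theorem eval_homogenizeComp_one_add_I_mul_X {P : ℂ[X]} {n : ℕ} (hP : P.natDegree ≤ n) (t : ℝ) :
    (P.homogenizeComp n (1 + C I * X) (1 - C I * X)).eval (t : ℂ) =
      P.eval (cayley t) * (1 - I * t) ^ n := by
  have hU : (1 + C I * X).eval (t : ℂ) = 1 + I * t := by simp
  have hV : (1 - C I * X).eval (t : ℂ) = 1 - I * t := by simp
  rw [eval_homogenizeComp hP _ _ (hV ▸ one_sub_I_mul_ne_zero t), hU, hV, cayley]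

theorem eval_homogenizeComp_X_sub_one_cayley {A : ℂ[X]} {n : ℕ} (hA : A.natDegree ≤ n) (t : ℝ) :
    (A.homogenizeComp n (C (-I / 2) * (X - 1)) (C (1 / 2 : ℂ) * (X + 1))).eval (cayley t) =
      A.eval (t : ℂ) * (1 - I * t)⁻¹ ^ n := by
  have hw := one_sub_I_mul_ne_zero t
  have hV : (C (1 / 2 : ℂ) * (X + 1)).eval (cayley t) = (1 - I * t)⁻¹ := by
    rw [eval_mul, eval_C, eval_add, eval_X, eval_one, cayley_add_one]
    field_simp
  have hUV : (C (-I / 2) * (X - 1)).eval (cayley t) / (C (1 / 2 : ℂ) * (X + 1)).eval (cayley t)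
      = (t : ℂ) := by
    rw [hV, eval_mul, eval_C, eval_sub, eval_X, eval_one, cayley_sub_one]
    field_simp
    linear_combination (-(t : ℂ)) * I_sq
  rw [eval_homogenizeComp hA _ _ (hV ▸ inv_ne_zero hw), hUV, hV]

theorem exists_eq_norm_sq_comp_cayley (g : ℂ → ℂ) (n : ℕ) (P : ℂ[X]) (hP : P.natDegree ≤ 2 * n)
    (hPg : ∀ z, z ≠ 0 → P.eval z = z ^ n * g z) (hg : ∀ t : ℝ, 0 ≤ g (cayley t)) :
    ∃ p : ℂ[X], ∀ t : ℝ, g (cayley t) = ((‖p.eval (cayley t)‖ : ℝ) : ℂ) ^ 2 := by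
  set Q := P.homogenizeComp (2 * n) (1 + C I * X) (1 - C I * X)
  have hQ : ∀ t : ℝ, Q.eval (t : ℂ) = ((1 + t ^ 2 : ℝ) : ℂ) ^ n * g (cayley t) := fun t => by
    rw [eval_homogenizeComp_one_add_I_mul_X hP, hPg _ (cayley_ne_zero t),
      ← one_sub_I_mul_pow_mul_cayley_pow]
    ring
  obtain ⟨R, hRQ⟩ := exists_map_eq_of_eval_im_eq_zero (Q := Q) fun t => by
    rw [hQ, ← ofReal_pow, im_ofReal_mul, ← (nonneg_iff.1 (hg t)).2, mul_zero]
  have hR : ∀ t : ℝ, ((R.eval t : ℝ) : ℂ) = Q.eval (t : ℂ) := fun t => by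
    rw [← hRQ, eval_map_algebraMap]
    exact ofReal_eval R t
  obtain ⟨A, hAdeg, hA⟩ := exists_eval_eq_norm_sq_of_nonneg R fun t =>
    zero_le_real.1 (by rw [hR, hQ]; exact mul_nonneg (by positivity) (hg t))
  have hAn : A.natDegree ≤ n := by
    have : R.natDegree ≤ 2 * n := by
      rw [← natDegree_map_eq_of_injective (algebraMap ℝ ℂ).injective, hRQ]
      exact natDegree_homogenizeComp_le _ _ (by compute_degree!) (by compute_degree!)
    omega
  refine ⟨A.homogenizeComp n (C (-I / 2) * (X - 1)) (C (1 / 2 : ℂ) * (X + 1)), fun t => ?_⟩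
  have hQt := hQ t
  rw [← hR, hA] at hQt
  have h1t : ((1 + t ^ 2) ^ n : ℂ) ≠ 0 :=
    pow_ne_zero _ (by exact_mod_cast (by positivity : (1 + t ^ 2 : ℝ) ≠ 0))
  rw [show g (cayley t) = ((‖A.eval (t : ℂ)‖ ^ 2 / (1 + t ^ 2) ^ n : ℝ) : ℂ) by
    push_cast at hQt ⊢
    rw [hQt]
    field_simp]
  rw [eval_homogenizeComp_X_sub_one_cayley hAn, ← ofReal_pow, norm_mul, norm_pow, norm_inv, mul_pow,
    ← pow_mul, inv_pow, mul_comm n 2, pow_mul, norm_one_sub_I_mul_sq, div_eq_mul_inv]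

theorem fejer_riesz (f : ℂ → ℂ)
    (hLaurent : ∃ (s : Finset ℤ) (c : ℤ → ℂ), ∀ z : ℂ, z ≠ 0 →
      f z = ∑ k ∈ s, c k * z ^ k)
    (hnn : ∀ z : ℂ, ‖z‖ = 1 → (f z).im = 0 ∧ 0 ≤ (f z).re) :
    ∃ p : Polynomial ℂ, ∀ z : ℂ, ‖z‖ = 1 →
      f z = ((‖p.eval z‖ : ℝ) : ℂ) ^ 2 := by
  obtain ⟨s, c, hc⟩ := hLaurent
  have hcircle : ∀ z : ℂ, ‖z‖ = 1 → f z = ∑ k ∈ s, c k * z ^ k := fun z hz =>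
    hc z (norm_ne_zero_iff.1 (hz ▸ one_ne_zero))
  obtain ⟨n, P, hPdeg, hP⟩ := exists_eval_eq_pow_mul_laurent s c
  obtain ⟨p, hp⟩ := exists_eq_norm_sq_comp_cayley _ n P hPdeg hP fun t => by
    obtain ⟨him, hre⟩ := hnn _ (norm_cayley t)
    exact hcircle _ (norm_cayley t) ▸ nonneg_iff.2 ⟨hre, him.symm⟩
  refine ⟨p, fun z hz => ?_⟩
  rw [hcircle z hz]
  refine eq_of_eq_comp_cayley (g := fun z => ∑ k ∈ s, c k * z ^ k)
    (h := fun z => ((‖p.eval z‖ : ℝ) : ℂ) ^ 2) ?_ ?_ hp hz <;> fun_prop (disch := norm_num)
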